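/- Let Ω be a finite connected bipartite subgraph of a weighted graph and p > 1. If f is a maximum eigenfunction of the Dirichlet p-Laplacian on Ω (an eigenfunction pertaining to the largest eigenvalue λ_{m,p}(Ω)), then f(x)·f(y) < 0 for every edge x ∼ y with x, y ∈ Ω. -/

import Mathlib

/-!
By Green's formula a maximum eigenfunction `f` satisfies `E_p(f) = λ_{m,p} ‖f‖^p`, i.e. it
maximises the Rayleigh quotient. Let `e = ±1` alternate across the bipartition. Replacing `f`
by `g = e |f|` keeps `‖f‖` and can only increase each edge difference, since
`|f y - f x| ≤ |f x| + |f y| = |g y - g x|`; so `g` is again a maximiser, and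
`E_p(f) = E_p(g)`. A maximiser cannot vanish at a vertex `a` next to a vertex where it does
not, if all neighbours of `a` have the same sign: moving `g a` by `t` against that sign gains
energy of order `t` and norm only of order `t ^ p`. By connectivity `f` therefore has no zero
in `Ω`, and then an edge with `f x f y > 0` would make the inequality above strict.
-/

open scoped BigOperators

namespace PGraph

variable {V : Type*}

/-- The `p`-Dirichlet energy `E_p(u) = (1/2) ∑_{x,y} μ_{xy} |u(y)-u(x)|^p`. -/
noncomputable def energy (μ : V → V → ℝ) (p : ℝ) (u : V → ℝ) : ℝ :=
  (1 / 2) * ∑ᶠ x : V, ∑ᶠ y : V, μ x y * |u y - u x| ^ p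

/-- `‖u‖_{p,Ω}^p = ∑_{x∈Ω} |u(x)|^p ν_x`. -/
noncomputable def pnormP (ν : V → ℝ) (Ω : Finset V) (p : ℝ) (u : V → ℝ) : ℝ :=
  ∑ x ∈ Ω, |u x| ^ p * ν x

/-- The `p`-Laplacian `Δ_p u(x) = (1/ν_x) ∑_y μ_{xy} |u(y)-u(x)|^{p-2}(u(y)-u(x))`. -/
noncomputable def plap (μ : V → V → ℝ) (ν : V → ℝ) (p : ℝ) (u : V → ℝ) (x : V) : ℝ :=
  (1 / ν x) * ∑ᶠ y : V, μ x y * (|u y - u x| ^ (p - 2) * (u y - u x))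

/-- `u` is an eigenfunction of the Dirichlet `p`-Laplacian on `Ω` with eigenvalue `lam`:
`u` vanishes outside `Ω` (zero extension), `u ≢ 0` on `Ω`, and
`Δ_p u = -lam |u|^{p-2} u` on `Ω`. -/
def IsDirEigenfun (μ : V → V → ℝ) (ν : V → ℝ) (Ω : Finset V) (p : ℝ)
    (u : V → ℝ) (lam : ℝ) : Prop :=
  (∀ x, x ∉ Ω → u x = 0) ∧ (∃ x ∈ Ω, u x ≠ 0) ∧
    ∀ x ∈ Ω, plap μ ν p u x = -lam * (|u x| ^ (p - 2) * u x)

/-- The first Dirichlet eigenvalue, via the Rayleigh quotient characterization. -/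
noncomputable def lam1 (μ : V → V → ℝ) (ν : V → ℝ) (Ω : Finset V) (p : ℝ) : ℝ :=
  sInf {t : ℝ | ∃ u : V → ℝ, (∀ x, x ∉ Ω → u x = 0) ∧ (∃ x ∈ Ω, u x ≠ 0) ∧
    t = energy μ p u / pnormP ν Ω p u}

/-- The maximum Dirichlet eigenvalue, via the Rayleigh quotient characterization. -/
noncomputable def lamMax (μ : V → V → ℝ) (ν : V → ℝ) (Ω : Finset V) (p : ℝ) : ℝ :=
  sSup {t : ℝ | ∃ u : V → ℝ, (∀ x, x ∉ Ω → u x = 0) ∧ (∃ x ∈ Ω, u x ≠ 0) ∧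
    t = energy μ p u / pnormP ν Ω p u}

/-- The induced subgraph on `Ω` is connected. -/
def ConnOn (μ : V → V → ℝ) (Ω : Finset V) : Prop :=
  ∀ x ∈ Ω, ∀ y ∈ Ω,
    Relation.ReflTransGen (fun a b => a ∈ Ω ∧ b ∈ Ω ∧ 0 < μ a b) x y

/-- The induced subgraph on `Ω` is bipartite with parts `V₁, V₂`. -/
def BipartiteOn (μ : V → V → ℝ) (Ω : Finset V) : Prop :=
  ∃ V₁ V₂ : Set V, (Ω : Set V) = V₁ ∪ V₂ ∧ Disjoint V₁ V₂ ∧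
    ∀ x ∈ Ω, ∀ y ∈ Ω, 0 < μ x y → ((x ∈ V₁ ∧ y ∈ V₂) ∨ (x ∈ V₂ ∧ y ∈ V₁))

/-- A locally finite weighted graph: symmetric nonnegative edge weights without
self-loops, finitely many neighbours at each vertex, positive vertex weights. -/
structure IsWeightedGraph (μ : V → V → ℝ) (ν : V → ℝ) : Prop where
  symm : ∀ x y, μ x y = μ y x
  nonneg : ∀ x y, 0 ≤ μ x y
  loopless : ∀ x, μ x x = 0
  locFin : ∀ x, (Function.support (μ x)).Finite
  nuPos : ∀ x, 0 < ν x

/-- The edge boundary measure `|∂U|_μ` of a finite vertex set `U`. -/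
noncomputable def bdryWt (μ : V → V → ℝ) (U : Finset V) : ℝ :=
  ∑ x ∈ U, ∑ᶠ y ∈ {z : V | z ∉ U}, μ x y

/-- The Dirichlet Cheeger constant `h_{μ,ν}(Ω) = min_{∅ ≠ U ⊆ Ω} |∂U|_μ / |U|_ν`. -/
noncomputable def cheeger (μ : V → V → ℝ) (ν : V → ℝ) (Ω : Finset V) : ℝ :=
  sInf {t : ℝ | ∃ U : Finset V, U ⊆ Ω ∧ U.Nonempty ∧
    t = bdryWt μ U / ∑ x ∈ U, ν x}

end PGraph

section RealInequalities

variable {p : ℝ}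

lemma abs_rpow_sub_two_mul_mul_self (hp : p ≠ 0) (a : ℝ) :
    |a| ^ (p - 2) * a * a = |a| ^ p := by
  rcases eq_or_ne a 0 with rfl | ha
  · simp [Real.zero_rpow hp]
  · rw [mul_assoc, ← abs_mul_abs_self, ← pow_two, ← Real.rpow_two,
      ← Real.rpow_add (abs_pos.mpr ha), sub_add_cancel]

lemma abs_sub_rpow_le (hp : 1 ≤ p) (a b : ℝ) :
    |a - b| ^ p ≤ 2 ^ (p - 1) * (|a| ^ p + |b| ^ p) := by
  calc |a - b| ^ p ≤ (|a| + |b|) ^ p :=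
        Real.rpow_le_rpow (abs_nonneg _) (abs_sub a b) (by linarith)
    _ ≤ 2 ^ (p - 1) * (|a| ^ p + |b| ^ p) := by
        exact_mod_cast NNReal.rpow_add_le_mul_rpow_add_rpow ‖a‖₊ ‖b‖₊ hp

lemma rpow_add_le_rpow_add (hp : 1 ≤ p) {c t : ℝ} (hc : 0 < c) (ht : 0 ≤ t) :
    c ^ p + c ^ (p - 1) * t ≤ (c + t) ^ p := by
  have hmono : c ^ (p - 1) ≤ (c + t) ^ (p - 1) :=
    Real.rpow_le_rpow hc.le (by linarith) (by linarith)
  have hsplit : ∀ x : ℝ, 0 < x → x ^ p = x ^ (p - 1) * x := fun x hx => by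
    rw [← Real.rpow_add_one hx.ne', sub_add_cancel]
  rw [hsplit c hc, hsplit (c + t) (by linarith)]
  nlinarith

open Filter Topology in
lemma exists_pos_mul_rpow_lt (hp : 1 < p) (C : ℝ) {K : ℝ} (hK : 0 < K) :
    ∃ t > 0, C * t ^ p < K * t := by
  have hlim : Tendsto (fun t : ℝ => C * t ^ (p - 1)) (𝓝[>] 0) (𝓝 0) := by
    have := (Real.continuousAt_rpow_const 0 (p - 1) (Or.inr (by linarith))).tendsto
    rw [Real.zero_rpow (by linarith)] at this
    simpa using (this.const_mul C).mono_left nhdsWithin_le_nhds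
  obtain ⟨t, hlt, ht⟩ := ((hlim.eventually (gt_mem_nhds hK)).and self_mem_nhdsWithin).exists
  refine ⟨t, ht, ?_⟩
  calc C * t ^ p = C * t ^ (p - 1) * t := by
        rw [mul_assoc, ← Real.rpow_add_one (ne_of_gt ht), sub_add_cancel]
    _ < K * t := mul_lt_mul_of_pos_right hlt ht

lemma abs_sub_lt_abs_add_abs_of_mul_pos {a b : ℝ} (h : 0 < a * b) :
    |a - b| < |a| + |b| := by
  rcases mul_pos_iff.mp h with ⟨ha, hb⟩ | ⟨ha, hb⟩
  · rw [abs_of_pos ha, abs_of_pos hb, abs_sub_lt_iff]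
    constructor <;> linarith
  · rw [abs_of_neg ha, abs_of_neg hb, abs_sub_lt_iff]
    constructor <;> linarith

lemma abs_sub_mul_eq_abs_add {a s t : ℝ} (has : a * s ≤ 0) (hs : |s| = 1) (ht : 0 ≤ t) :
    |a - s * t| = |a| + t := by
  rcases (abs_eq zero_le_one).mp hs with rfl | rfl
  · rw [mul_one] at has
    rw [abs_of_nonpos has, abs_of_nonpos (by linarith)]
    ring
  · have ha : 0 ≤ a := by linarith
    rw [abs_of_nonneg ha, abs_of_nonneg (by linarith)]
    ring

end RealInequalities

lemma Relation.ReflTransGen.exists_rel_not {α : Type*} {r : α → α → Prop} {P : α → Prop}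
    {x y : α} (h : Relation.ReflTransGen r x y) (hx : P x) (hy : ¬ P y) :
    ∃ a b, r a b ∧ P a ∧ ¬ P b := by
  induction h with
  | refl => exact absurd hx hy
  | @tail b c _ hbc ih =>
    by_cases hb : P b
    · exact ⟨b, c, hbc, hb, hy⟩
    · exact ih hb

lemma finsum_finsum_eq_sum_sum {α M : Type*} [AddCommMonoid M] (F : α → α → M)
    (s : Finset α) (hF : ∀ x y, F x y ≠ 0 → x ∈ s ∧ y ∈ s) :
    ∑ᶠ x, ∑ᶠ y, F x y = ∑ x ∈ s, ∑ y ∈ s, F x y := by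
  have hrow : ∀ x, ∑ᶠ y, F x y = ∑ y ∈ s, F x y := fun x =>
    finsum_eq_finsetSum_of_support_subset _ fun y hy => (hF x y hy).2
  simp_rw [hrow]
  refine finsum_eq_finsetSum_of_support_subset _ fun x hx => ?_
  obtain ⟨y, -, hy⟩ := Finset.exists_ne_zero_of_sum_ne_zero hx
  exact (hF x y hy).1

namespace PGraph

section

variable {V : Type*} {μ : V → V → ℝ} {ν : V → ℝ} {Ω : Finset V} {p : ℝ}

open scoped Classical in
noncomputable def closedNbhd (hG : IsWeightedGraph μ ν) (Ω : Finset V) : Finset V :=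
  Ω ∪ Ω.biUnion fun x => (hG.locFin x).toFinset

lemma mem_closedNbhd {hG : IsWeightedGraph μ ν} {y : V} :
    y ∈ closedNbhd hG Ω ↔ y ∈ Ω ∨ ∃ x ∈ Ω, μ x y ≠ 0 := by
  classical
  simp [closedNbhd]

lemma subset_closedNbhd (hG : IsWeightedGraph μ ν) : Ω ⊆ closedNbhd hG Ω :=
  fun _ hx => mem_closedNbhd.mpr (Or.inl hx)

lemma mem_closedNbhd_of_ne_zero (hG : IsWeightedGraph μ ν) {x y : V} (hxy : μ x y ≠ 0)
    (h : x ∈ Ω ∨ y ∈ Ω) : x ∈ closedNbhd hG Ω ∧ y ∈ closedNbhd hG Ω := by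
  rcases h with hx | hy
  · exact ⟨subset_closedNbhd hG hx, mem_closedNbhd.mpr (Or.inr ⟨x, hx, hxy⟩)⟩
  · exact ⟨mem_closedNbhd.mpr (Or.inr ⟨y, hy, by rwa [hG.symm]⟩), subset_closedNbhd hG hy⟩

lemma energy_eq_sum_closedNbhd (hG : IsWeightedGraph μ ν) (hp : p ≠ 0) {u : V → ℝ}
    (hu : ∀ x, x ∉ Ω → u x = 0) :
    energy μ p u = (1 / 2) * ∑ x ∈ closedNbhd hG Ω, ∑ y ∈ closedNbhd hG Ω,
      μ x y * |u y - u x| ^ p := by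
  rw [energy, finsum_finsum_eq_sum_sum _ _ fun x y hxy => ?_]
  refine mem_closedNbhd_of_ne_zero hG (left_ne_zero_of_mul hxy) ?_
  by_contra! h
  rw [hu x h.1, hu y h.2, sub_self, abs_zero, Real.zero_rpow hp, mul_zero] at hxy
  exact hxy rfl

lemma mul_plap_eq_sum_closedNbhd (hG : IsWeightedGraph μ ν) {x : V} (hx : x ∈ Ω)
    (u : V → ℝ) :
    ν x * plap μ ν p u x
      = ∑ y ∈ closedNbhd hG Ω, μ x y * (|u y - u x| ^ (p - 2) * (u y - u x)) := by
  rw [plap, ← mul_assoc, mul_one_div_cancel (hG.nuPos x).ne', one_mul]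
  exact finsum_eq_finsetSum_of_support_subset _ fun y hy =>
    (mem_closedNbhd_of_ne_zero hG (left_ne_zero_of_mul hy) (Or.inl hx)).2

lemma pnormP_pos (hG : IsWeightedGraph μ ν) {u : V → ℝ} (h : ∃ x ∈ Ω, u x ≠ 0) :
    0 < pnormP ν Ω p u := by
  obtain ⟨x, hx, hux⟩ := h
  exact Finset.sum_pos'
    (fun y _ => mul_nonneg (Real.rpow_nonneg (abs_nonneg _) _) (hG.nuPos y).le)
    ⟨x, hx, mul_pos (Real.rpow_pos_of_pos (abs_pos.mpr hux) p) (hG.nuPos x)⟩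

lemma pnormP_congr_abs {u v : V → ℝ} (h : ∀ x ∈ Ω, |u x| = |v x|) :
    pnormP ν Ω p u = pnormP ν Ω p v :=
  Finset.sum_congr rfl fun x hx => by rw [h x hx]

theorem sum_mul_plap_mul_self (hG : IsWeightedGraph μ ν) (hp : p ≠ 0) {u : V → ℝ}
    (hu : ∀ x, x ∉ Ω → u x = 0) :
    ∑ x ∈ Ω, ν x * plap μ ν p u x * u x = -energy μ p u := by
  set T := closedNbhd hG Ω
  set A : V → V → ℝ := fun x y => μ x y * (|u y - u x| ^ (p - 2) * (u y - u x))
  have hA : ∀ x y, A y x = -A x y := fun x y => by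
    simp only [A, hG.symm y x, abs_sub_comm (u x) (u y)]
    ring
  have hext : ∑ x ∈ Ω, ν x * plap μ ν p u x * u x = ∑ x ∈ T, ∑ y ∈ T, A x y * u x := by
    rw [← Finset.sum_subset (subset_closedNbhd hG) fun x _ hx => by simp [hu x hx]]
    refine Finset.sum_congr rfl fun x hx => ?_
    rw [mul_plap_eq_sum_closedNbhd hG hx, Finset.sum_mul]
  have hswap : ∑ x ∈ T, ∑ y ∈ T, A x y * u x = -∑ x ∈ T, ∑ y ∈ T, A x y * u y := by
    rw [Finset.sum_comm, ← Finset.sum_neg_distrib]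
    refine Finset.sum_congr rfl fun x _ => ?_
    rw [← Finset.sum_neg_distrib]
    exact Finset.sum_congr rfl fun y _ => by rw [hA]; ring
  have hpair : ∀ x y, A x y * (u y - u x) = μ x y * |u y - u x| ^ p := fun x y => by
    show μ x y * (|u y - u x| ^ (p - 2) * (u y - u x)) * (u y - u x) = _
    rw [mul_assoc, abs_rpow_sub_two_mul_mul_self hp]
  rw [energy_eq_sum_closedNbhd hG hp hu, hext]
  have : ∑ x ∈ T, ∑ y ∈ T, μ x y * |u y - u x| ^ p
      = ∑ x ∈ T, ∑ y ∈ T, A x y * u y - ∑ x ∈ T, ∑ y ∈ T, A x y * u x := by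
    simp only [← hpair, mul_sub, Finset.sum_sub_distrib]
  linarith

theorem IsDirEigenfun.energy_eq (hG : IsWeightedGraph μ ν) (hp : p ≠ 0) {f : V → ℝ}
    {lam : ℝ} (hf : IsDirEigenfun μ ν Ω p f lam) :
    energy μ p f = lam * pnormP ν Ω p f := by
  obtain ⟨hsupp, -, heig⟩ := hf
  rw [← neg_neg (energy μ p f), ← sum_mul_plap_mul_self hG hp hsupp, pnormP,
    Finset.mul_sum, ← Finset.sum_neg_distrib]
  refine Finset.sum_congr rfl fun x hx => ?_
  rw [heig x hx, ← abs_rpow_sub_two_mul_mul_self hp]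
  ring

lemma abs_rpow_mul_le_pnormP (hG : IsWeightedGraph μ ν) (hp : p ≠ 0) {u : V → ℝ}
    (hu : ∀ x, x ∉ Ω → u x = 0) (x : V) : |u x| ^ p * ν x ≤ pnormP ν Ω p u := by
  have hnonneg : ∀ y ∈ Ω, 0 ≤ |u y| ^ p * ν y := fun y _ =>
    mul_nonneg (Real.rpow_nonneg (abs_nonneg _) _) (hG.nuPos y).le
  by_cases hx : x ∈ Ω
  · exact Finset.single_le_sum hnonneg hx
  · rw [hu x hx, abs_zero, Real.zero_rpow hp, zero_mul]
    exact Finset.sum_nonneg hnonneg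

lemma exists_energy_le_mul_pnormP (hG : IsWeightedGraph μ ν) (hp : 1 ≤ p) (Ω : Finset V) :
    ∃ C, ∀ u : V → ℝ, (∀ x, x ∉ Ω → u x = 0) → energy μ p u ≤ C * pnormP ν Ω p u := by
  have hp0 : p ≠ 0 := by linarith
  set T := closedNbhd hG Ω
  refine ⟨(1 / 2) * ∑ x ∈ T, ∑ y ∈ T, μ x y * 2 ^ (p - 1) * ((ν y)⁻¹ + (ν x)⁻¹),
    fun u hu => ?_⟩
  set N := pnormP ν Ω p u
  have hpt : ∀ z, |u z| ^ p ≤ (ν z)⁻¹ * N := fun z => by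
    rw [← div_eq_inv_mul, le_div_iff₀ (hG.nuPos z)]
    exact abs_rpow_mul_le_pnormP hG hp0 hu z
  rw [energy_eq_sum_closedNbhd hG hp0 hu, mul_assoc]
  simp only [Finset.sum_mul]
  refine mul_le_mul_of_nonneg_left
    (Finset.sum_le_sum fun x _ => Finset.sum_le_sum fun y _ => ?_) (by norm_num)
  calc μ x y * |u y - u x| ^ p ≤ μ x y * (2 ^ (p - 1) * (|u y| ^ p + |u x| ^ p)) :=
        mul_le_mul_of_nonneg_left (abs_sub_rpow_le hp _ _) (hG.nonneg x y)
    _ ≤ μ x y * (2 ^ (p - 1) * ((ν y)⁻¹ * N + (ν x)⁻¹ * N)) := by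
        gcongr
        · exact hG.nonneg x y
        · exact hpt y
        · exact hpt x
    _ = μ x y * 2 ^ (p - 1) * ((ν y)⁻¹ + (ν x)⁻¹) * N := by ring

lemma energy_le_lamMax_mul (hG : IsWeightedGraph μ ν) (hp : 1 ≤ p) {u : V → ℝ}
    (hu : ∀ x, x ∉ Ω → u x = 0) (hu0 : ∃ x ∈ Ω, u x ≠ 0) :
    energy μ p u ≤ lamMax μ ν Ω p * pnormP ν Ω p u := by
  obtain ⟨C, hC⟩ := exists_energy_le_mul_pnormP hG hp Ω
  have hbdd : BddAbove {t : ℝ | ∃ u : V → ℝ, (∀ x, x ∉ Ω → u x = 0) ∧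
      (∃ x ∈ Ω, u x ≠ 0) ∧ t = energy μ p u / pnormP ν Ω p u} := by
    refine ⟨C, ?_⟩
    rintro t ⟨v, hv, hv0, rfl⟩
    exact (div_le_iff₀ (pnormP_pos hG hv0)).mpr (hC v hv)
  rw [← div_le_iff₀ (pnormP_pos hG hu0)]
  exact le_csSup hbdd ⟨u, hu, hu0, rfl⟩

lemma energy_le_energy (hG : IsWeightedGraph μ ν) (hp : p ≠ 0) {u v : V → ℝ}
    (hu : ∀ x, x ∉ Ω → u x = 0) (hv : ∀ x, x ∉ Ω → v x = 0)
    (h : ∀ x y, μ x y * |u y - u x| ^ p ≤ μ x y * |v y - v x| ^ p) :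
    energy μ p u ≤ energy μ p v := by
  rw [energy_eq_sum_closedNbhd hG hp hu, energy_eq_sum_closedNbhd hG hp hv]
  exact mul_le_mul_of_nonneg_left
    (Finset.sum_le_sum fun x _ => Finset.sum_le_sum fun y _ => h x y) (by norm_num)

lemma energy_add_le_energy (hG : IsWeightedGraph μ ν) (hp : p ≠ 0) {u v : V → ℝ}
    (hu : ∀ x, x ∉ Ω → u x = 0) (hv : ∀ x, x ∉ Ω → v x = 0)
    (h : ∀ x y, μ x y * |u y - u x| ^ p ≤ μ x y * |v y - v x| ^ p)
    {a b : V} (ha : a ∈ Ω) (hb : b ∈ Ω) {δ : ℝ}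
    (hab : μ a b * |u b - u a| ^ p + δ ≤ μ a b * |v b - v a| ^ p) :
    energy μ p u + δ / 2 ≤ energy μ p v := by
  set T := closedNbhd hG Ω
  set D : V → V → ℝ := fun x y => μ x y * |v y - v x| ^ p - μ x y * |u y - u x| ^ p
  have hD : ∀ x y, 0 ≤ D x y := fun x y => sub_nonneg.mpr (h x y)
  have hδ : δ ≤ ∑ x ∈ T, ∑ y ∈ T, D x y :=
    calc δ ≤ D a b := by simp only [D]; linarith
      _ ≤ ∑ y ∈ T, D a y := Finset.single_le_sum (fun y _ => hD a y) (subset_closedNbhd hG hb)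
      _ ≤ _ := Finset.single_le_sum (fun x _ => Finset.sum_nonneg fun y _ => hD x y)
          (subset_closedNbhd hG ha)
  rw [energy_eq_sum_closedNbhd hG hp hu, energy_eq_sum_closedNbhd hG hp hv]
  simp only [D, Finset.sum_sub_distrib] at hδ
  linarith

lemma pnormP_update_of_eq_zero [DecidableEq V] (hp : p ≠ 0) {u : V → ℝ} {a : V} (ha : a ∈ Ω)
    (hua : u a = 0) (r : ℝ) :
    pnormP ν Ω p (Function.update u a r) = pnormP ν Ω p u + |r| ^ p * ν a := by
  unfold pnormP
  rw [← Finset.add_sum_erase _ _ ha, ← Finset.add_sum_erase _ _ ha,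
    Finset.sum_congr rfl fun x hx => by rw [Function.update_of_ne (Finset.ne_of_mem_erase hx)],
    Function.update_self, hua, abs_zero, Real.zero_rpow hp]
  ring

lemma edge_term_le_update [DecidableEq V] (hG : IsWeightedGraph μ ν) (hp : 0 ≤ p) {u : V → ℝ}
    {a : V} (hua : u a = 0) {s t : ℝ} (hs : |s| = 1) (ht : 0 ≤ t)
    (hnbr : ∀ y, μ a y ≠ 0 → u y * s ≤ 0) (x y : V) :
    μ x y * |u y - u x| ^ p
      ≤ μ x y * |Function.update u a (s * t) y - Function.update u a (s * t) x| ^ p := by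
  rcases eq_or_ne (μ x y) 0 with h0 | hxy
  · simp [h0]
  refine mul_le_mul_of_nonneg_left (Real.rpow_le_rpow (abs_nonneg _) ?_ hp) (hG.nonneg x y)
  by_cases hx : x = a <;> by_cases hy : y = a
  · exact absurd (hx ▸ hy ▸ hG.loopless a) hxy
  · subst hx
    rw [Function.update_self, Function.update_of_ne hy, hua, sub_zero,
      abs_sub_mul_eq_abs_add (hnbr y hxy) hs ht]
    linarith
  · subst hy
    rw [Function.update_self, Function.update_of_ne hx, hua, zero_sub, abs_neg, abs_sub_comm,
      abs_sub_mul_eq_abs_add (hnbr x (by rwa [hG.symm])) hs ht]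
    linarith
  · rw [Function.update_of_ne hx, Function.update_of_ne hy]

/-- Raising `u` at `a` to `s t` gains energy of order `t` across the edge `a ∼ b`, while the
norm only grows by order `t ^ p`. -/
theorem energy_lt_lamMax_mul_of_eq_zero (hG : IsWeightedGraph μ ν) (hp : 1 < p) {u : V → ℝ}
    (hu : ∀ x, x ∉ Ω → u x = 0) {a b : V} (ha : a ∈ Ω) (hb : b ∈ Ω) (hab : 0 < μ a b)
    (hua : u a = 0) (hub : u b ≠ 0) {s : ℝ} (hs : |s| = 1)
    (hnbr : ∀ y, μ a y ≠ 0 → u y * s ≤ 0) :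
    energy μ p u < lamMax μ ν Ω p * pnormP ν Ω p u := by
  classical
  have hp0 : p ≠ 0 := by linarith
  have hc : 0 < |u b| := abs_pos.mpr hub
  have hK : 0 < μ a b * |u b| ^ (p - 1) / 2 := by positivity
  obtain ⟨t, ht, hsmall⟩ := exists_pos_mul_rpow_lt hp (lamMax μ ν Ω p * ν a) hK
  have hba : b ≠ a := fun h => hub (h ▸ hua)
  have hw : ∀ x, x ∉ Ω → Function.update u a (s * t) x = 0 := fun x hx => by
    rw [Function.update_of_ne (ne_of_mem_of_not_mem ha hx).symm, hu x hx]
  have hwa : Function.update u a (s * t) a ≠ 0 := by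
    rw [Function.update_self]
    exact mul_ne_zero (by rintro rfl; simp at hs) ht.ne'
  have hgain : μ a b * |u b - u a| ^ p + μ a b * |u b| ^ (p - 1) * t
      ≤ μ a b * |Function.update u a (s * t) b - Function.update u a (s * t) a| ^ p := by
    rw [Function.update_self, Function.update_of_ne hba, hua, sub_zero,
      abs_sub_mul_eq_abs_add (hnbr b hab.ne') hs ht.le]
    nlinarith [mul_le_mul_of_nonneg_left (rpow_add_le_rpow_add hp.le hc ht.le) hab.le]
  have hEw := energy_add_le_energy hG hp0 hu hw
    (edge_term_le_update hG (by linarith) hua hs ht.le hnbr) ha hb hgain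
  have hEw' := energy_le_lamMax_mul hG hp.le hw ⟨a, ha, hwa⟩
  rw [pnormP_update_of_eq_zero hp0 ha hua, abs_mul, hs, one_mul, abs_of_pos ht] at hEw'
  linarith

lemma BipartiteOn.exists_sign (h : BipartiteOn μ Ω) :
    ∃ e : V → ℝ, (∀ x, |e x| = 1) ∧ ∀ x ∈ Ω, ∀ y ∈ Ω, 0 < μ x y → e y = -e x := by
  classical
  obtain ⟨V₁, V₂, -, hdisj, hedge⟩ := h
  refine ⟨fun x => if x ∈ V₁ then 1 else -1, fun x => by dsimp only; split_ifs <;> simp, ?_⟩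
  intro x hx y hy hxy
  rcases hedge x hx y hy hxy with ⟨h₁, h₂⟩ | ⟨h₂, h₁⟩
  · simp [h₁, Set.disjoint_right.mp hdisj h₂]
  · simp [h₁, Set.disjoint_right.mp hdisj h₂]

section SignedAbs

variable {e f : V → ℝ}

lemma abs_signed_abs (he : ∀ x, |e x| = 1) (x : V) : |(e x * |f x|)| = |f x| := by
  rw [abs_mul, he, one_mul, abs_abs]

lemma signed_abs_ne_zero_iff (he : ∀ x, |e x| = 1) {x : V} : e x * |f x| ≠ 0 ↔ f x ≠ 0 := by
  rw [← abs_ne_zero, abs_signed_abs he, abs_ne_zero]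

lemma pnormP_signed_abs (he : ∀ x, |e x| = 1) :
    pnormP ν Ω p (fun x => e x * |f x|) = pnormP ν Ω p f :=
  pnormP_congr_abs fun x _ => abs_signed_abs he x

lemma abs_sub_signed_abs (he : ∀ x, |e x| = 1) {x y : V} (hxy : e y = -e x) :
    |(e y * |f y| - e x * |f x|)| = |f x| + |f y| := by
  rw [hxy, neg_mul, ← neg_add', abs_neg, ← mul_add, abs_mul, he, one_mul,
    abs_of_nonneg (by positivity), add_comm]

lemma edge_term_le_signed_abs (hG : IsWeightedGraph μ ν) (hp : 0 ≤ p) (he : ∀ x, |e x| = 1)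
    (hsign : ∀ x ∈ Ω, ∀ y ∈ Ω, 0 < μ x y → e y = -e x) (hf : ∀ x, x ∉ Ω → f x = 0)
    (x y : V) :
    μ x y * |f y - f x| ^ p ≤ μ x y * |(e y * |f y| - e x * |f x|)| ^ p := by
  rcases (hG.nonneg x y).eq_or_lt with h0 | hxy
  · simp [← h0]
  refine mul_le_mul_of_nonneg_left (Real.rpow_le_rpow (abs_nonneg _) ?_ hp) hxy.le
  by_cases hx : x ∈ Ω
  · by_cases hy : y ∈ Ω
    · rw [abs_sub_signed_abs he (hsign x hx y hy hxy), add_comm]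
      exact abs_sub _ _
    · simp [hf y hy, he]
  · simp [hf x hx, he]

lemma energy_lt_energy_signed_abs (hG : IsWeightedGraph μ ν) (hp : 0 < p)
    (he : ∀ x, |e x| = 1) (hsign : ∀ x ∈ Ω, ∀ y ∈ Ω, 0 < μ x y → e y = -e x)
    (hf : ∀ x, x ∉ Ω → f x = 0) {x y : V} (hx : x ∈ Ω) (hy : y ∈ Ω) (hxy : 0 < μ x y)
    (hpos : 0 < f x * f y) :
    energy μ p f < energy μ p fun z => e z * |f z| := by
  have hstrict : |f y - f x| ^ p < |(e y * |f y| - e x * |f x|)| ^ p := by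
    refine Real.rpow_lt_rpow (abs_nonneg _) ?_ hp
    rw [abs_sub_signed_abs he (hsign x hx y hy hxy), add_comm]
    exact abs_sub_lt_abs_add_abs_of_mul_pos (by linarith [mul_comm (f x) (f y)])
  have := energy_add_le_energy hG hp.ne' hf (fun z hz => by simp [hf z hz])
    (edge_term_le_signed_abs hG hp.le he hsign hf) hx hy
    (δ := μ x y * (|(e y * |f y| - e x * |f x|)| ^ p - |f y - f x| ^ p)) (le_of_eq (by ring))
  linarith [mul_pos hxy (sub_pos.mpr hstrict)]

theorem ne_zero_of_lamMax_mul_le_energy_signed_abs (hG : IsWeightedGraph μ ν) (hp : 1 < p)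
    (hconn : ConnOn μ Ω) (he : ∀ x, |e x| = 1)
    (hsign : ∀ x ∈ Ω, ∀ y ∈ Ω, 0 < μ x y → e y = -e x) (hf : ∀ x, x ∉ Ω → f x = 0)
    (hf0 : ∃ x ∈ Ω, f x ≠ 0)
    (hmax : lamMax μ ν Ω p * pnormP ν Ω p f ≤ energy μ p fun x => e x * |f x|) :
    ∀ z ∈ Ω, f z ≠ 0 := by
  intro z hz hfz
  obtain ⟨x₀, hx₀, hfx₀⟩ := hf0
  obtain ⟨a, b, ⟨ha, hb, hab⟩, hfa, hfb⟩ :=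
    (hconn z hz x₀ hx₀).exists_rel_not (P := (f · = 0)) hfz hfx₀
  have hnbr : ∀ y, μ a y ≠ 0 → e y * |f y| * e a ≤ 0 := by
    intro y hay
    by_cases hy : y ∈ Ω
    · rw [hsign a ha y hy ((hG.nonneg a y).lt_of_ne' hay)]
      nlinarith [abs_mul_abs_self (e a), he a, abs_nonneg (f y)]
    · simp [hf y hy]
  have hlt := energy_lt_lamMax_mul_of_eq_zero hG hp (fun x hx => by simp [hf x hx])
    ha hb hab (by simp [hfa]) ((signed_abs_ne_zero_iff he).mpr hfb) (he a) hnbr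
  rw [pnormP_signed_abs he] at hlt
  linarith

end SignedAbs

end

/-- on a finite connected bipartite subgraph `Ω`, a maximum eigenfunction of
the Dirichlet `p`-Laplacian (`p > 1`) changes sign along every edge of `Ω`. -/
theorem max_eigenfun_sign {V : Type*} {μ : V → V → ℝ} {ν : V → ℝ}
    (hG : IsWeightedGraph μ ν) {Ω : Finset V} (hconn : ConnOn μ Ω)
    (hbip : BipartiteOn μ Ω) {p : ℝ} (hp : 1 < p) {f : V → ℝ}
    (hf : IsDirEigenfun μ ν Ω p f (lamMax μ ν Ω p)) :
    ∀ x ∈ Ω, ∀ y ∈ Ω, 0 < μ x y → f x * f y < 0 := by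
  have hp0 : p ≠ 0 := by linarith
  have hEf : energy μ p f = lamMax μ ν Ω p * pnormP ν Ω p f := hf.energy_eq hG hp0
  obtain ⟨hsupp, hf0, -⟩ := hf
  obtain ⟨e, he, hsign⟩ := hbip.exists_sign
  have hg : ∀ x, x ∉ Ω → e x * |f x| = 0 := fun x hx => by simp [hsupp x hx]
  have hfg := energy_le_energy hG hp0 hsupp hg
    (edge_term_le_signed_abs hG (by linarith) he hsign hsupp)
  have hne := ne_zero_of_lamMax_mul_le_energy_signed_abs hG hp hconn he hsign hsupp hf0
    (hEf ▸ hfg)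
  have hg_le : (energy μ p fun x => e x * |f x|) ≤ lamMax μ ν Ω p * pnormP ν Ω p f :=
    pnormP_signed_abs he ▸ energy_le_lamMax_mul hG hp.le hg
      (hf0.imp fun _ ⟨hx, hfx⟩ => ⟨hx, (signed_abs_ne_zero_iff he).mpr hfx⟩)
  intro x hx y hy hxy
  by_contra hsame
  have hpos : 0 < f x * f y := (not_lt.mp hsame).lt_of_ne' (mul_ne_zero (hne x hx) (hne y hy))
  have hlt := energy_lt_energy_signed_abs hG (zero_lt_one.trans hp) he hsign hsupp hx hy hxy hpos
  linarith
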